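/- arXiv:1106.3462 — 8 statements merged into one kernel-verified Lean document; each statement's English description precedes it below -/
import Mathlib

section
/- Let R be a Noetherian domain, I a nonzero ideal, and r in R. If r satisfies a monic polynomial x^d + c_1 x^{d-1} + ... + c_d with c_j in I^{j+1} for all 1 ≤ j ≤ d, then for every injective ring homomorphism from R to a discrete valuation ring V with IV ≠ 0 and IV ≠ V, the order of r in V is strictly greater than the order of IV. -/
/-!
Let `IV = 𝔪^k`, so `k ≥ 1` as `IV ≠ V`. Write `v(r) = m` in `V` and suppose `m ≤ k`. In the image
of the equation the term `c_j r^{d-j}` has order at least `k(j+1) + (d-j)m ≥ dm + k > dm`, so every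
term but `r^d` has order larger than `v(r^d) = dm`, which the ultrametric inequality forbids.
-/

open IsDiscreteValuationRing

theorem IsDiscreteValuationRing.mem_maximalIdeal_pow_iff {V : Type*} [CommRing V] [IsDomain V]
    [IsDiscreteValuationRing V] (x : V) (n : ℕ) :
    x ∈ IsLocalRing.maximalIdeal V ^ n ↔ (n : ℕ∞) ≤ addVal V x := by
  obtain ⟨ϖ, hϖ⟩ := exists_irreducible V
  rw [hϖ.maximalIdeal_eq, Ideal.span_singleton_pow, Ideal.mem_span_singleton,
    ← addVal_le_iff_dvd, hϖ.addVal_pow]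

theorem AddValuation.lt_of_pow_add_sum_eq_zero {A : Type*} [CommRing A] (v : AddValuation A ℕ∞)
    {x : A} {a : ℕ → A} {d k : ℕ} (hk : 1 ≤ k)
    (ha : ∀ j ∈ Finset.Icc 1 d, ((k * (j + 1) : ℕ) : ℕ∞) ≤ v (a j))
    (hx : x ^ d + ∑ j ∈ Finset.Icc 1 d, a j * x ^ (d - j) = 0) :
    (k : ℕ∞) < v x := by
  by_contra! hle
  obtain ⟨m, hm⟩ := ENat.ne_top_iff_exists.mp (ne_top_of_le_ne_top (ENat.natCast_ne_top k) hle)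
  have hmk : m ≤ k := by exact_mod_cast hm ▸ hle
  have hterm : ∀ j ∈ Finset.Icc 1 d, ((d * m + 1 : ℕ) : ℕ∞) ≤ v (a j * x ^ (d - j)) := by
    intro j hj
    have hnat : d * m + 1 ≤ k * (j + 1) + (d - j) * m := by
      obtain ⟨e, rfl⟩ := Nat.exists_eq_add_of_le (Finset.mem_Icc.mp hj).2
      rw [Nat.add_sub_cancel_left]
      nlinarith
    rw [v.map_mul, v.map_pow, ← hm]
    calc ((d * m + 1 : ℕ) : ℕ∞) ≤ ((k * (j + 1) : ℕ) : ℕ∞) + ((d - j) * m : ℕ) := by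
          exact_mod_cast hnat
      _ ≤ v (a j) + (d - j) • (m : ℕ∞) := by
          rw [nsmul_eq_mul, Nat.cast_mul]
          exact add_le_add_left (ha j hj) _
  have hpow : ((d * m + 1 : ℕ) : ℕ∞) ≤ v (x ^ d) := by
    rw [eq_neg_of_add_eq_zero_left hx, v.map_neg]
    exact v.map_le_sum hterm
  rw [v.map_pow, ← hm, nsmul_eq_mul, ← Nat.cast_mul, Nat.cast_le] at hpow
  omega

theorem stmt1_general {R : Type*} [CommRing R]
    (I : Ideal R) (r : R)
    (d : ℕ) (c : ℕ → R)
    (hc : ∀ j, 1 ≤ j → j ≤ d → c j ∈ I ^ (j + 1))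
    (heq : r ^ d + ∑ j ∈ Finset.Icc 1 d, c j * r ^ (d - j) = 0)
    (V : Type*) [CommRing V] [IsDomain V] [IsDiscreteValuationRing V]
    (φ : R →+* V) (h1 : I.map φ ≠ ⊤)
    (k : ℕ) (hk : I.map φ = IsLocalRing.maximalIdeal V ^ k) :
    φ r ∈ IsLocalRing.maximalIdeal V ^ (k + 1) := by
  have hk1 : 1 ≤ k := by
    refine Nat.one_le_iff_ne_zero.mpr fun hk0 => h1 ?_
    rw [hk, hk0, pow_zero, Ideal.one_eq_top]
  have hvc : ∀ j ∈ Finset.Icc 1 d, ((k * (j + 1) : ℕ) : ℕ∞) ≤ addVal V (φ (c j)) := by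
    intro j hj
    obtain ⟨hj1, hjd⟩ := Finset.mem_Icc.mp hj
    rw [← mem_maximalIdeal_pow_iff, pow_mul, ← hk, ← Ideal.map_pow]
    exact Ideal.mem_map_of_mem φ (hc j hj1 hjd)
  have hφeq : φ r ^ d + ∑ j ∈ Finset.Icc 1 d, φ (c j) * φ r ^ (d - j) = 0 := by
    simpa [map_sum] using congrArg φ heq
  rw [mem_maximalIdeal_pow_iff, Nat.cast_add_one, ENat.add_one_le_iff (ENat.natCast_ne_top k)]
  exact (addVal V).lt_of_pow_add_sum_eq_zero hk1 hvc hφeq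

/-- If `r` satisfies a monic polynomial `x^d + c_1 x^{d-1} + ... + c_d` with
`c_j ∈ I^{j+1}`, then for every injective map to a DVR `V` with `IV ≠ 0` and `IV ≠ V`,
the order of `r` is strictly greater than the order of `IV` (expressed via the
power of the maximal ideal with `I.map φ = m^k`). -/
theorem stmt1 {R : Type*} [CommRing R] [IsDomain R] [IsNoetherianRing R]
    (I : Ideal R) (hI : I ≠ ⊥) (r : R)
    (d : ℕ) (hd : 0 < d) (c : ℕ → R)
    (hc : ∀ j, 1 ≤ j → j ≤ d → c j ∈ I ^ (j + 1))
    (heq : r ^ d + ∑ j ∈ Finset.Icc 1 d, c j * r ^ (d - j) = 0)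
    (V : Type*) [CommRing V] [IsDomain V] [IsDiscreteValuationRing V]
    (φ : R →+* V) (hφ : Function.Injective φ)
    (h0 : I.map φ ≠ ⊥) (h1 : I.map φ ≠ ⊤)
    (k : ℕ) (hk : I.map φ = IsLocalRing.maximalIdeal V ^ k) :
    φ r ∈ IsLocalRing.maximalIdeal V ^ (k + 1) :=
  stmt1_general I r d c hc heq V φ h1 k hk
end

section
/- Let R be a Noetherian ring and I an ideal. The set of r in R such that r^n lies in the integral closure of I^{n+1} for some n ≥ 1 is an ideal of R (the inner integral closure of I). -/
/-- The integral closure of an ideal `I`: elements `x` satisfying a monic equation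
`x^d + a 1 * x^(d-1) + ... + a d = 0` with `a j ∈ I^j` for `1 ≤ j ≤ d`. -/
def Ideal.intClosure {R : Type*} [CommRing R] (I : Ideal R) : Set R :=
  {x | ∃ (d : ℕ) (a : ℕ → R), 0 < d ∧ (∀ j, 1 ≤ j → j ≤ d → a j ∈ I ^ j) ∧
    x ^ d + ∑ j ∈ Finset.Icc 1 d, a j * x ^ (d - j) = 0}

/-- The inner integral closure of an ideal `I`:
`{ r | ∃ n ≥ 1, r ^ n ∈ integral closure of I ^ (n+1) }`. -/
def Ideal.innerIntClosure {R : Type*} [CommRing R] (I : Ideal R) : Set R :=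
  {r | ∃ n : ℕ, 1 ≤ n ∧ r ^ n ∈ (I ^ (n + 1)).intClosure}

/-!
Inside the polynomial ring `R[X]`, `x` lies in the integral closure of `I ^ k` exactly when
`x X ^ k` is integral over the Rees algebra `R[I X]`; since integral elements form a subring,
these graded pieces are ideals with `cl(I ^ a) * cl(I ^ b) ⊆ cl(I ^ (a + b))`.
If `r ^ n, s ^ n ∈ cl(I ^ (n + 1))` (a common `n` is reached by passing to `n * m`), expand
`(r + s) ^ N` with `N = n (n + 2)`: writing `i = n q + a` and `N - i = n q' + b` with
`a, b < n`, one has `q + q' ≥ n + 1`, so `r ^ i s ^ (N - i)` lies in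
`cl(I ^ ((n + 1) (q + q'))) ⊆ cl(I ^ ((n + 1) ^ 2)) = cl(I ^ (N + 1))`.
-/

open Finset Polynomial

theorem sum_range_succ_eq_add_sum_Icc_sub {M : Type*} [AddCommMonoid M] (f : ℕ → M) (d : ℕ) :
    ∑ i ∈ range (d + 1), f i = f d + ∑ j ∈ Icc 1 d, f (d - j) := by
  rw [← sum_range_reflect, sum_range_succ', ← Ico_add_one_right_eq_Icc, sum_Ico_eq_sum_range]
  simp only [add_tsub_cancel_right, tsub_zero, add_comm]

theorem Nat.add_one_le_div_add_sub_div {n : ℕ} (hn : 0 < n) (i : ℕ) :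
    n + 1 ≤ i / n + (n * (n + 2) - i) / n := by
  have hN : n * (n + 2) = n * n + 2 * n := by ring
  have h1 := Nat.div_add_mod i n
  have h2 := Nat.div_add_mod (n * (n + 2) - i) n
  have h3 := Nat.mod_lt i hn
  have h4 := Nat.mod_lt (n * (n + 2) - i) hn
  by_contra! h
  have : n * (i / n) + n * ((n * (n + 2) - i) / n) ≤ n * n := by
    rw [← Nat.mul_add]; exact Nat.mul_le_mul_left n (by omega)
  omega

theorem IsIntegral.exists_monic_natDegree_pos {R A : Type*} [CommRing R] [Nontrivial R]
    [Ring A] [Algebra R A] {x : A} (hx : IsIntegral R x) :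
    ∃ p : R[X], p.Monic ∧ 0 < p.natDegree ∧ aeval x p = 0 := by
  obtain ⟨p, hp, hroot⟩ := hx
  refine ⟨p * X, hp.mul monic_X, ?_, ?_⟩
  · rw [natDegree_mul_X hp.ne_zero]; omega
  · rw [map_mul, aeval_def, hroot, zero_mul]

namespace Ideal

variable {R : Type*} [CommRing R]

theorem exists_forall_mem_pow_of_mem_intClosure {J : Ideal R} {x : R} (hx : x ∈ J.intClosure) :
    ∃ (d : ℕ) (a : ℕ → R), 0 < d ∧ (∀ j, a j ∈ J ^ j) ∧
      x ^ d + ∑ j ∈ Icc 1 d, a j * x ^ (d - j) = 0 := by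
  obtain ⟨d, a, hd, ha, hroot⟩ := hx
  refine ⟨d, fun j => if j ∈ Icc 1 d then a j else 0, hd, fun j => ?_, ?_⟩
  · dsimp only
    split_ifs with hj
    · exact ha j (mem_Icc.1 hj).1 (mem_Icc.1 hj).2
    · exact zero_mem _
  · rw [← hroot]
    exact congrArg _ (sum_congr rfl fun j hj => by simp only [if_pos hj])

theorem zero_mem_intClosure (J : Ideal R) : (0 : R) ∈ J.intClosure :=
  ⟨1, fun _ => 0, one_pos, fun _ _ _ => zero_mem _, by simp⟩

theorem mem_intClosure_top (x : R) : x ∈ (⊤ : Ideal R).intClosure :=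
  ⟨1, fun _ => -x, one_pos, fun j _ _ => by simp [Ideal.top_pow], by simp⟩

theorem intClosure_mono {J K : Ideal R} (h : J ≤ K) : J.intClosure ⊆ K.intClosure :=
  fun _ ⟨d, a, hd, ha, hroot⟩ =>
    ⟨d, a, hd, fun j h1 h2 => pow_right_mono h j (ha j h1 h2), hroot⟩

variable {I : Ideal R}

theorem isIntegral_monomial_of_mem_intClosure_pow {k : ℕ} {x : R}
    (hx : x ∈ (I ^ k).intClosure) : IsIntegral (reesAlgebra I) (monomial k x) := by
  obtain ⟨d, a, hd, ha, hroot⟩ := exists_forall_mem_pow_of_mem_intClosure hx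
  let b : ℕ → reesAlgebra I := fun j =>
    ⟨monomial (k * j) (a j), reesAlgebra.monomial_mem.2 (pow_mul I k j ▸ ha j)⟩
  refine ⟨X ^ d + ∑ j ∈ Icc 1 d, C (b j) * X ^ (d - j), ?_, ?_⟩
  · refine monic_X_pow_add ((degree_sum_le _ _).trans_lt ?_)
    refine (Finset.sup_lt_iff (WithBot.bot_lt_coe d)).2 fun j hj => ?_
    refine (degree_C_mul_X_pow_le _ _).trans_lt ?_
    have : d - j < d := by simp only [mem_Icc] at hj; omega
    exact WithBot.coe_lt_coe.2 this
  · have hterm : ∀ j ∈ Icc 1 d,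
        algebraMap (reesAlgebra I) R[X] (b j) * monomial k x ^ (d - j) =
          monomial (k * d) (a j * x ^ (d - j)) := fun j hj => by
      change monomial (k * j) (a j) * _ = _
      rw [monomial_pow, monomial_mul_monomial, ← Nat.mul_add,
        Nat.add_sub_cancel' (mem_Icc.1 hj).2]
    simp only [eval₂_add, eval₂_X_pow, eval₂_finsetSum, eval₂_mul, eval₂_C]
    rw [sum_congr rfl hterm, monomial_pow, ← map_sum, ← map_add, hroot, map_zero]

theorem mem_intClosure_pow_of_isIntegral_monomial {k : ℕ} {x : R}
    (hx : IsIntegral (reesAlgebra I) (monomial k x)) : x ∈ (I ^ k).intClosure := by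
  rcases subsingleton_or_nontrivial R with hR | hR
  · rw [Subsingleton.elim x 0]; exact zero_mem_intClosure _
  obtain ⟨p, hp, hd, hroot⟩ := hx.exists_monic_natDegree_pos
  set d := p.natDegree
  -- the coefficient of `X ^ (k * d)` in `p (x X ^ k) = 0`
  have hcoeff : ∑ i ∈ range (d + 1), (p.coeff i : R[X]).coeff (k * (d - i)) * x ^ i = 0 := by
    have := congrArg (coeff · (k * d)) hroot
    simp only [aeval_eq_sum_range, finsetSum_coeff, coeff_zero] at this
    rw [← this]
    refine sum_congr rfl fun i hi => ?_
    rw [monomial_pow, Algebra.smul_def, ← coeff_mul_monomial]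
    congr 2
    have : i ≤ d := Nat.lt_succ_iff.1 (mem_range.1 hi)
    rw [← Nat.mul_add, Nat.sub_add_cancel this]
  refine ⟨d, fun j => (p.coeff (d - j) : R[X]).coeff (k * j), hd, fun j _ _ => ?_, ?_⟩
  · rw [← pow_mul]; exact (p.coeff (d - j)).2 _
  · rw [sum_range_succ_eq_add_sum_Icc_sub, Nat.sub_self, mul_zero, hp.coeff_natDegree] at hcoeff
    convert hcoeff using 2
    · simp
    · exact sum_congr rfl fun j hj => by rw [Nat.sub_sub_self (mem_Icc.1 hj).2]

theorem mem_intClosure_pow_iff_isIntegral_monomial (I : Ideal R) (k : ℕ) (x : R) :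
    x ∈ (I ^ k).intClosure ↔ IsIntegral (reesAlgebra I) (monomial k x) :=
  ⟨isIntegral_monomial_of_mem_intClosure_pow, mem_intClosure_pow_of_isIntegral_monomial⟩

theorem mul_mem_intClosure_pow {a b : ℕ} {x y : R} (hx : x ∈ (I ^ a).intClosure)
    (hy : y ∈ (I ^ b).intClosure) : x * y ∈ (I ^ (a + b)).intClosure := by
  rw [mem_intClosure_pow_iff_isIntegral_monomial] at hx hy ⊢
  rw [← monomial_mul_monomial]
  exact hx.mul hy

theorem pow_mem_intClosure_pow {a : ℕ} {x : R} (hx : x ∈ (I ^ a).intClosure) (t : ℕ) :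
    x ^ t ∈ (I ^ (a * t)).intClosure := by
  rw [mem_intClosure_pow_iff_isIntegral_monomial] at hx ⊢
  rw [← monomial_pow]
  exact hx.pow t

def intClosureIdeal (J : Ideal R) : Ideal R where
  carrier := J.intClosure
  zero_mem' := zero_mem_intClosure J
  add_mem' {x y} hx hy := by
    rw [← pow_one J, mem_intClosure_pow_iff_isIntegral_monomial] at hx hy ⊢
    rw [map_add]
    exact hx.add hy
  smul_mem' c x hx := by
    rw [← pow_one J] at hx ⊢
    simpa using mul_mem_intClosure_pow (a := 0) (by simpa using mem_intClosure_top c) hx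

theorem pow_mul_mem_intClosure_pow_mul_add_one {n : ℕ} {r : R}
    (hr : r ^ n ∈ (I ^ (n + 1)).intClosure) {t : ℕ} (ht : 1 ≤ t) :
    r ^ (n * t) ∈ (I ^ (n * t + 1)).intClosure :=
  intClosure_mono (pow_le_pow_right (by nlinarith)) (pow_mul r n t ▸ pow_mem_intClosure_pow hr t)

theorem add_pow_mem_intClosure_pow {n : ℕ} (hn : 0 < n) {r s : R}
    (hr : r ^ n ∈ (I ^ (n + 1)).intClosure) (hs : s ^ n ∈ (I ^ (n + 1)).intClosure) :
    (r + s) ^ (n * (n + 2)) ∈ (I ^ (n * (n + 2) + 1)).intClosure := by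
  set N := n * (n + 2)
  rw [add_pow]
  refine Ideal.sum_mem (intClosureIdeal _) fun i _ => ?_
  have hsplit : r ^ i * s ^ (N - i) * N.choose i = (r ^ (i % n) * s ^ ((N - i) % n) * N.choose i)
      * ((r ^ n) ^ (i / n) * (s ^ n) ^ ((N - i) / n)) := by
    have hr' : r ^ i = (r ^ n) ^ (i / n) * r ^ (i % n) := by
      rw [← pow_mul, ← pow_add, Nat.div_add_mod]
    have hs' : s ^ (N - i) = (s ^ n) ^ ((N - i) / n) * s ^ ((N - i) % n) := by
      rw [← pow_mul, ← pow_add, Nat.div_add_mod]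
    rw [hr', hs']
    ring
  have hexp : N + 1 ≤ (n + 1) * (i / n) + (n + 1) * ((N - i) / n) :=
    calc N + 1 = (n + 1) * (n + 1) := by ring
      _ ≤ _ := by
        rw [← Nat.mul_add]
        exact Nat.mul_le_mul_left _ (Nat.add_one_le_div_add_sub_div hn i)
  rw [hsplit]
  exact Ideal.mul_mem_left (intClosureIdeal _) _ (intClosure_mono (pow_le_pow_right hexp)
    (mul_mem_intClosure_pow (pow_mem_intClosure_pow hr _) (pow_mem_intClosure_pow hs _)))

theorem add_mem_innerIntClosure {r s : R} (hr : r ∈ I.innerIntClosure)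
    (hs : s ∈ I.innerIntClosure) : r + s ∈ I.innerIntClosure := by
  obtain ⟨n, hn, hrn⟩ := hr
  obtain ⟨m, hm, hsm⟩ := hs
  have hnm : 0 < n * m := by positivity
  refine ⟨n * m * (n * m + 2), by nlinarith, add_pow_mem_intClosure_pow hnm
    (pow_mul_mem_intClosure_pow_mul_add_one hrn hm) ?_⟩
  rw [mul_comm n m]
  exact pow_mul_mem_intClosure_pow_mul_add_one hsm hn

def innerIntClosureIdeal (I : Ideal R) : Ideal R where
  carrier := I.innerIntClosure
  zero_mem' := ⟨1, le_rfl, by simpa using zero_mem_intClosure _⟩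
  add_mem' := add_mem_innerIntClosure
  smul_mem' c r := fun ⟨n, hn, hr⟩ =>
    ⟨n, hn, by rw [smul_eq_mul, mul_pow]; exact Ideal.mul_mem_left (intClosureIdeal _) _ hr⟩

end Ideal

theorem stmt2_general {R : Type*} [CommRing R] (I : Ideal R) :
    ∃ J : Ideal R, ∀ r : R, r ∈ J ↔ r ∈ I.innerIntClosure :=
  ⟨I.innerIntClosureIdeal, fun _ => Iff.rfl⟩

/-- The inner integral closure of `I` is an ideal of `R`. -/
theorem stmt2 {R : Type*} [CommRing R] [IsNoetherianRing R] (I : Ideal R) :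
    ∃ J : Ideal R, ∀ r : R, r ∈ J ↔ r ∈ I.innerIntClosure :=
  stmt2_general I
end

section
/- Let R ⊆ S be an integral extension of Noetherian rings and I an ideal of R. Then the contraction to R of the inner integral closure of IS equals the inner integral closure of I. -/
open Polynomial

theorem Polynomial.coeff_mul_X_pow_mem_pow_natDegree_sub {R : Type*} [CommRing R] {J : Ideal R}
    {p : R[X]} (hp : ∀ k, p.coeff k ∈ J ^ (p.natDegree - k)) (n k : ℕ) :
    (p * X ^ n).coeff k ∈ J ^ ((p * X ^ n).natDegree - k) := by
  nontriviality R
  rcases eq_or_ne p 0 with rfl | hp0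
  · simp
  rw [natDegree_mul_X_pow n hp0, coeff_mul_X_pow']
  split_ifs with hnk
  · simpa only [show p.natDegree + n - k = p.natDegree - (k - n) by omega] using hp (k - n)
  · exact zero_mem _

theorem exists_monic_and_coeff_mem_pow_and_aeval_smul_eq_zero {R A M : Type*} [CommRing R]
    [CommRing A] [Algebra R A] [AddCommGroup M] [Module A M] [Module R M] [IsScalarTower R A M]
    [Module.Finite R M] (J : Ideal R) (y : A) (hy : ∀ m : M, y • m ∈ J • (⊤ : Submodule R M)) :
    ∃ p : R[X], p.Monic ∧ (∀ k, p.coeff k ∈ J ^ (p.natDegree - k)) ∧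
      ∀ m : M, aeval y p • m = 0 := by
  obtain ⟨p, hp, -, hcoeff, hzero⟩ :=
    LinearMap.exists_monic_and_natDegree_eq_and_coeff_mem_pow_and_aeval_eq_zero R
      (Algebra.lsmul R R M y) J (by rintro _ ⟨m, rfl⟩; exact hy m)
  rw [aeval_algHom_apply] at hzero
  exact ⟨p, hp, hcoeff, LinearMap.congr_fun hzero⟩

namespace Ideal

variable {R S A : Type*} [CommRing R] [CommRing S] [CommRing A]

theorem map_mem_intClosure_map (f : R →+* S) {J : Ideal R} {x : R} (hx : x ∈ J.intClosure) :
    f x ∈ (J.map f).intClosure := by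
  obtain ⟨d, a, hd, ha, heq⟩ := hx
  refine ⟨d, fun j => f (a j), hd, fun j hj hjd => ?_, ?_⟩
  · rw [← Ideal.map_pow]
    exact mem_map_of_mem f (ha j hj hjd)
  · simpa only [map_add, map_pow, map_sum, map_mul, map_zero] using congrArg f heq

theorem mem_intClosure_of_monic {J : Ideal R} {x : R} {p : R[X]} (hp : p.Monic)
    (hcoeff : ∀ k, p.coeff k ∈ J ^ (p.natDegree - k)) (hx : p.eval x = 0) :
    x ∈ J.intClosure := by
  rcases subsingleton_or_nontrivial R with _ | _
  · exact ⟨1, 0, one_pos, fun _ _ _ => zero_mem _, Subsingleton.elim _ _⟩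
  set d := p.natDegree
  have hd : 0 < d := by
    refine Nat.pos_of_ne_zero fun h => ?_
    rw [hp.natDegree_eq_zero.mp h, eval_one] at hx
    exact one_ne_zero hx
  refine ⟨d, fun j => p.coeff (d - j), hd, fun j _ hjd => ?_, ?_⟩
  · simpa only [Nat.sub_sub_self hjd] using hcoeff (d - j)
  have hreflect : ∑ j ∈ Finset.Icc 1 d, p.coeff (d - j) * x ^ (d - j)
      = ∑ i ∈ Finset.range d, p.coeff i * x ^ i :=
    Finset.sum_nbij' (fun j => d - j) (fun i => d - i)
      (by intro j hj; simp only [Finset.mem_Icc, Finset.mem_range] at hj ⊢; omega)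
      (by intro i hi; simp only [Finset.mem_Icc, Finset.mem_range] at hi ⊢; omega)
      (by intro j hj; simp only [Finset.mem_Icc] at hj; omega)
      (by intro i hi; simp only [Finset.mem_range] at hi; omega)
      (fun _ _ => rfl)
  rw [hreflect, add_comm, ← hx, eval_eq_sum_range, Finset.sum_range_succ, hp.coeff_natDegree,
    one_mul]

theorem sup_pow_succ_le (K X : Ideal A) (m : ℕ) :
    (K ⊔ X) ^ (m + 1) ≤ K * (K ⊔ X) ^ m ⊔ X ^ (m + 1) := by
  induction m with
  | zero => simp
  | succ m ih =>
    calc (K ⊔ X) ^ (m + 2) = K * (K ⊔ X) ^ (m + 1) ⊔ X * (K ⊔ X) ^ (m + 1) := by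
          rw [pow_succ' _ (m + 1), sup_mul]
      _ ≤ K * (K ⊔ X) ^ (m + 1) ⊔ (X * (K * (K ⊔ X) ^ m) ⊔ X ^ (m + 2)) := by
          refine sup_le_sup_left ?_ _
          rw [pow_succ' X, ← mul_sup]
          exact mul_mono_right ih
      _ ≤ K * (K ⊔ X) ^ (m + 1) ⊔ X ^ (m + 2) := by
          refine sup_le le_sup_left (sup_le (le_sup_of_le_left ?_) le_sup_right)
          rw [mul_left_comm, pow_succ' (K ⊔ X)]
          exact mul_mono_right (mul_mono_left le_sup_right)

theorem exists_span_singleton_mul_sup_pow_le {K : Ideal A} {y : A} (hy : y ∈ K.intClosure) :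
    ∃ n, span {y} * (K ⊔ span {y}) ^ n ≤ K * (K ⊔ span {y}) ^ n := by
  obtain ⟨d, a, hd, ha, heq⟩ := hy
  set X := span {y}
  refine ⟨d - 1, ?_⟩
  have hyd : y ^ d ∈ K * (K ⊔ X) ^ (d - 1) := by
    rw [eq_neg_of_add_eq_zero_left heq, ← Finset.sum_neg_distrib]
    refine sum_mem _ fun j hj => neg_mem ?_
    obtain ⟨hj1, hjd⟩ := Finset.mem_Icc.mp hj
    have hKj : K ^ j ≤ K * (K ⊔ X) ^ (j - 1) := by
      calc K ^ j = K * K ^ (j - 1) := by rw [← pow_succ', Nat.sub_add_cancel hj1]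
        _ ≤ K * (K ⊔ X) ^ (j - 1) := mul_mono_right (pow_right_mono le_sup_left _)
    have := mul_mem_mul (hKj (ha j hj1 hjd))
      (pow_mem_pow (mem_sup_right (mem_span_singleton_self y) : y ∈ K ⊔ X) (d - j))
    rwa [mul_assoc, ← pow_add, show j - 1 + (d - j) = d - 1 by omega] at this
  calc X * (K ⊔ X) ^ (d - 1) ≤ (K ⊔ X) ^ (d - 1 + 1) := by
        rw [pow_succ']
        exact mul_mono_left le_sup_right
    _ ≤ K * (K ⊔ X) ^ (d - 1) ⊔ X ^ (d - 1 + 1) := sup_pow_succ_le K X (d - 1)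
    _ ≤ K * (K ⊔ X) ^ (d - 1) := by
        rw [Nat.sub_add_cancel hd, span_singleton_pow, sup_le_iff, span_le,
          Set.singleton_subset_iff]
        exact ⟨le_rfl, hyd⟩

theorem exists_monic_and_coeff_mem_pow_and_aeval_eq_zero [Algebra R A] [Module.Finite R A]
    [IsNoetherianRing R] {J : Ideal R} {y : A} (hy : y ∈ (J.map (algebraMap R A)).intClosure) :
    ∃ p : R[X], p.Monic ∧ (∀ k, p.coeff k ∈ J ^ (p.natDegree - k)) ∧ aeval y p = 0 := by
  set K := J.map (algebraMap R A)
  obtain ⟨n, hn⟩ := exists_span_singleton_mul_sup_pow_le hy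
  set L := (K ⊔ span {y}) ^ n
  have hyL : ∀ m : L, y • m ∈ J • (⊤ : Submodule R L) := fun m => by
    have hm : y * m ∈ K * L := hn (mul_mem_mul (mem_span_singleton_self y) m.2)
    rw [← smul_eq_mul, ← Submodule.restrictScalars_mem R, smul_restrictScalars] at hm
    exact (Submodule.mem_smul_top_iff J (L.restrictScalars R) (y • m)).mpr hm
  obtain ⟨p, hp, hcoeff, hzero⟩ := exists_monic_and_coeff_mem_pow_and_aeval_smul_eq_zero J y hyL
  have hynL : y ^ n ∈ L := pow_mem_pow (mem_sup_right (mem_span_singleton_self y)) n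
  refine ⟨p * X ^ n, hp.mul (monic_X_pow n), coeff_mul_X_pow_mem_pow_natDegree_sub hcoeff n, ?_⟩
  simpa [Submodule.coe_smul_of_tower] using congrArg Subtype.val (hzero ⟨y ^ n, hynL⟩)

theorem exists_finset_forall_subalgebra_mem_map [Algebra R S] {J : Ideal R} {s : S}
    (hs : s ∈ J.map (algebraMap R S)) :
    ∃ T : Finset S, ∀ B : Subalgebra R S, (T : Set S) ⊆ B →
      ∃ t ∈ J.map (algebraMap R B), (t : S) = s := by
  classical
  induction hs using Submodule.span_induction with
  | mem s hs =>
    obtain ⟨r, hr, rfl⟩ := hs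
    exact ⟨∅, fun B _ => ⟨algebraMap R B r, mem_map_of_mem _ hr, rfl⟩⟩
  | zero => exact ⟨∅, fun B _ => ⟨0, zero_mem _, rfl⟩⟩
  | add s₁ s₂ _ _ ih₁ ih₂ =>
    obtain ⟨T₁, hT₁⟩ := ih₁
    obtain ⟨T₂, hT₂⟩ := ih₂
    refine ⟨T₁ ∪ T₂, fun B hB => ?_⟩
    rw [Finset.coe_union, Set.union_subset_iff] at hB
    obtain ⟨t₁, ht₁, rfl⟩ := hT₁ B hB.1
    obtain ⟨t₂, ht₂, rfl⟩ := hT₂ B hB.2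
    exact ⟨t₁ + t₂, add_mem ht₁ ht₂, rfl⟩
  | smul c s _ ih =>
    obtain ⟨T, hT⟩ := ih
    refine ⟨insert c T, fun B hB => ?_⟩
    rw [Finset.coe_insert, Set.insert_subset_iff] at hB
    obtain ⟨t, ht, rfl⟩ := hT B hB.2
    exact ⟨⟨c, hB.1⟩ * t, mul_mem_left _ _ ht, rfl⟩

theorem exists_fg_subalgebra_algebraMap_mem_intClosure_map [Algebra R S] {J : Ideal R} {x : R}
    (hx : algebraMap R S x ∈ (J.map (algebraMap R S)).intClosure) :
    ∃ B : Subalgebra R S, B.FG ∧ algebraMap R B x ∈ (J.map (algebraMap R B)).intClosure := by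
  classical
  obtain ⟨d, a, hd, ha, heq⟩ := hx
  have hT : ∀ j ∈ Finset.Icc 1 d, ∃ T : Finset S, ∀ B : Subalgebra R S, (T : Set S) ⊆ B →
      ∃ t ∈ (J ^ j).map (algebraMap R B), (t : S) = a j := fun j hj => by
    obtain ⟨hj1, hjd⟩ := Finset.mem_Icc.mp hj
    exact exists_finset_forall_subalgebra_mem_map (by rw [Ideal.map_pow]; exact ha j hj1 hjd)
  choose! T hT using hT
  set B := Algebra.adjoin R ((Finset.Icc 1 d).biUnion T : Set S)
  have hB : ∀ j ∈ Finset.Icc 1 d, ∃ t ∈ (J ^ j).map (algebraMap R B), (t : S) = a j :=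
    fun j hj => hT j hj B <| (Finset.coe_subset.mpr (Finset.subset_biUnion_of_mem T hj)).trans
      Algebra.subset_adjoin
  choose! b hb hba using hB
  refine ⟨B, ⟨_, rfl⟩, d, b, hd, fun j hj1 hjd => ?_, Subtype.val_injective ?_⟩
  · rw [← Ideal.map_pow]
    exact hb j (Finset.mem_Icc.mpr ⟨hj1, hjd⟩)
  · push_cast
    rw [Finset.sum_congr rfl fun j hj => by rw [hba j hj]]
    exact heq

theorem mem_intClosure_of_algebraMap_mem_intClosure_map [Algebra R S] [IsNoetherianRing R]
    [Algebra.IsIntegral R S] (hinj : Function.Injective (algebraMap R S)) {J : Ideal R} {x : R}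
    (hx : algebraMap R S x ∈ (J.map (algebraMap R S)).intClosure) : x ∈ J.intClosure := by
  obtain ⟨B, hBfg, hxB⟩ := exists_fg_subalgebra_algebraMap_mem_intClosure_map hx
  have : Algebra.IsIntegral R B := Algebra.IsIntegral.of_injective B.val Subtype.val_injective
  have : Algebra.FiniteType R B := B.fg_iff_finiteType.mp hBfg
  have : Module.Finite R B := Algebra.IsIntegral.finite
  obtain ⟨p, hp, hcoeff, hzero⟩ := exists_monic_and_coeff_mem_pow_and_aeval_eq_zero hxB
  refine mem_intClosure_of_monic hp hcoeff (hinj ?_)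
  rw [aeval_algebraMap_apply, coe_aeval_eq_eval] at hzero
  simpa using congrArg Subtype.val hzero

end Ideal

theorem stmt5_general {R S : Type*} [CommRing R] [CommRing S]
    [IsNoetherianRing R] [Algebra R S] [Algebra.IsIntegral R S]
    (hinj : Function.Injective (algebraMap R S)) (I : Ideal R) :
    (algebraMap R S) ⁻¹' (Ideal.map (algebraMap R S) I).innerIntClosure
      = I.innerIntClosure := by
  ext r
  constructor
  · rintro ⟨n, hn, hr⟩
    rw [← map_pow, ← Ideal.map_pow] at hr
    exact ⟨n, hn, Ideal.mem_intClosure_of_algebraMap_mem_intClosure_map hinj hr⟩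
  · rintro ⟨n, hn, hr⟩
    refine ⟨n, hn, ?_⟩
    rw [← map_pow, ← Ideal.map_pow]
    exact Ideal.map_mem_intClosure_map _ hr

/-- If `R ⊆ S` is an integral extension, the contraction of the inner integral closure
of `IS` is the inner integral closure of `I`. -/
theorem stmt5 {R S : Type*} [CommRing R] [CommRing S]
    [IsNoetherianRing R] [IsNoetherianRing S] [Algebra R S] [Algebra.IsIntegral R S]
    (hinj : Function.Injective (algebraMap R S)) (I : Ideal R) :
    (algebraMap R S) ⁻¹' (Ideal.map (algebraMap R S) I).innerIntClosure
      = I.innerIntClosure :=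
  stmt5_general hinj I
end

section
/- Let k be a field, L_1, ..., L_n finite field extensions of k, and (V_i, m_i) discrete valuation rings with residue field V_i/m_i ≅ L_i. Let S be the subring of the product of the V_i consisting of tuples (v_1, ..., v_n) such that there exists α in k with v_i ≡ α mod m_i for all i. Then S is a seminormal ring. -/
/-- A ring is seminormal if it is reduced and every element `x` of its total quotient ring
with `x^2, x^3` in (the image of) the ring lies in the ring. -/
def IsSeminormalRing (R : Type*) [CommRing R] : Prop :=
  IsReduced R ∧ ∀ x : FractionRing R,
    x ^ 2 ∈ (algebraMap R (FractionRing R)).range →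
    x ^ 3 ∈ (algebraMap R (FractionRing R)).range →
    x ∈ (algebraMap R (FractionRing R)).range

/-!
Embed `S` into `K = ∏ Frac(V i)`. Elements of `S` supported on a single coordinate show that
nonzerodivisors of `S` have all coordinates nonzero, so the total quotient ring of `S` embeds
into `K` and it suffices to show that `x ∈ K` with `x², x³ ∈ S` lies in `S`. Each `V i` is
integrally closed, so `x ∈ ∏ V i`; its image `r` in `∏ L i` then has `r², r³ ∈ k`, and
`r = r³ / r²` (or `r = 0` if `r² = 0`) lies in `k` as well.
-/

open Function

def RingHom.IsSeminormal {A B : Type*} [CommRing A] [CommRing B] (f : A →+* B) : Prop :=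
  ∀ x : B, x ^ 2 ∈ f.range → x ^ 3 ∈ f.range → x ∈ f.range

namespace RingHom.IsSeminormal

variable {A B C : Type*} [CommRing A] [CommRing B] [CommRing C]

theorem comp {f : A →+* B} {g : B →+* C} (hg : g.IsSeminormal) (hf : f.IsSeminormal)
    (hg_inj : Injective g) : (g.comp f).IsSeminormal := by
  rintro x ⟨a₂, ha₂⟩ ⟨a₃, ha₃⟩
  obtain ⟨b, rfl⟩ := hg x ⟨f a₂, ha₂⟩ ⟨f a₃, ha₃⟩
  rw [comp_apply, ← map_pow] at ha₂ ha₃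
  obtain ⟨a, rfl⟩ := hf b ⟨a₂, hg_inj ha₂⟩ ⟨a₃, hg_inj ha₃⟩
  exact ⟨a, rfl⟩

theorem of_comp {f : A →+* B} {g : B →+* C} (h : (g.comp f).IsSeminormal)
    (hg_inj : Injective g) : f.IsSeminormal := by
  rintro x ⟨a₂, ha₂⟩ ⟨a₃, ha₃⟩
  obtain ⟨a, ha⟩ := h (g x) ⟨a₂, by simp [ha₂]⟩ ⟨a₃, by simp [ha₃]⟩
  exact ⟨a, hg_inj ha⟩

theorem subtype_comap {f : A →+* B} (hf : f.IsSeminormal) (ρ : C →+* B) :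
    (f.range.comap ρ).subtype.IsSeminormal := by
  intro x h₂ h₃
  simp only [Subring.range_subtype, Subring.mem_comap, map_pow] at h₂ h₃ ⊢
  exact hf _ h₂ h₃

theorem pi {ι : Type*} {A B : ι → Type*} [∀ i, CommRing (A i)] [∀ i, CommRing (B i)]
    {f : ∀ i, A i →+* B i} (hf : ∀ i, (f i).IsSeminormal) :
    (RingHom.pi fun i => (f i).comp (Pi.evalRingHom A i)).IsSeminormal := by
  rintro x ⟨a₂, ha₂⟩ ⟨a₃, ha₃⟩
  have hx : ∀ i, x i ∈ (f i).range := fun i =>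
    hf i (x i) ⟨a₂ i, congrFun ha₂ i⟩ ⟨a₃ i, congrFun ha₃ i⟩
  choose a ha using hx
  exact ⟨a, funext ha⟩

end RingHom.IsSeminormal

theorem IsIntegrallyClosed.isSeminormal_algebraMap (R K : Type*) [CommRing R] [CommRing K]
    [Algebra R K] [IsFractionRing R K] [IsIntegrallyClosed R] : (algebraMap R K).IsSeminormal :=
  fun _ ⟨_, ha⟩ _ =>
    IsIntegrallyClosed.exists_algebraMap_eq_of_isIntegral_pow two_pos (ha ▸ isIntegral_algebraMap)

theorem RingHom.isSeminormal_algebraMap_of_isReduced (k B : Type*) [Field k] [CommRing B]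
    [IsReduced B] [Algebra k B] : (algebraMap k B).IsSeminormal := by
  rintro x ⟨α, hα⟩ ⟨β, hβ⟩
  rcases eq_or_ne α 0 with rfl | hα₀
  · have hx : x = 0 := IsNilpotent.eq_zero ⟨2, by rw [← hα, map_zero]⟩
    exact ⟨0, by rw [map_zero, hx]⟩
  · refine ⟨β / α, ?_⟩
    calc algebraMap k B (β / α) = x ^ 3 * algebraMap k B α⁻¹ := by rw [div_eq_mul_inv, map_mul, hβ]
      _ = x * algebraMap k B (α * α⁻¹) := by rw [map_mul, hα]; ring
      _ = x := by rw [mul_inv_cancel₀ hα₀, map_one, mul_one]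

theorem Subring.apply_ne_zero_of_mem_nonZeroDivisors {ι : Type*} {V : ι → Type*}
    [∀ i, CommRing (V i)] {S : Subring (∀ i, V i)}
    (hS : ∀ i, ∃ u ∈ S, u i ≠ 0 ∧ ∀ j ≠ i, u j = 0) {t : S} (ht : t ∈ nonZeroDivisors S)
    (i : ι) : (t : ∀ i, V i) i ≠ 0 := by
  intro hti
  obtain ⟨u, hu, hui, hu_supp⟩ := hS i
  have hut : (⟨u, hu⟩ : S) * t = 0 := by
    ext j
    by_cases hj : j = i
    · subst hj; simp [hti]
    · simp [hu_supp j hj]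
  exact hui (congrFun (congrArg Subtype.val (mem_nonZeroDivisors_iff_right.mp ht _ hut)) i)

theorem IsSeminormalRing.of_injective {R K : Type*} [CommRing R] [CommRing K] [IsReduced K]
    (ψ : R →+* K) (hψ_inj : Injective ψ) (hψ_unit : ∀ t ∈ nonZeroDivisors R, IsUnit (ψ t))
    (hψ : ψ.IsSeminormal) : IsSeminormalRing R := by
  refine ⟨isReduced_of_injective ψ hψ_inj, ?_⟩
  let φ : FractionRing R →+* K := IsLocalization.lift fun t : nonZeroDivisors R => hψ_unit t t.2
  have hφ_inj : Injective φ := (IsLocalization.lift_injective_iff _).mpr fun x y =>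
    ⟨fun h => congrArg ψ (IsFractionRing.injective R (FractionRing R) h),
      fun h => congrArg _ (hψ_inj h)⟩
  rw [← IsLocalization.lift_comp (M := nonZeroDivisors R) (S := FractionRing R)
    (fun t : nonZeroDivisors R => hψ_unit t t.2)] at hψ
  exact hψ.of_comp hφ_inj

theorem IsSeminormalRing.of_subring_pi {ι : Type*} {V : ι → Type*} [∀ i, CommRing (V i)]
    [∀ i, IsDomain (V i)] [∀ i, IsIntegrallyClosed (V i)] {S : Subring (∀ i, V i)}
    (hS_supp : ∀ i, ∃ u ∈ S, u i ≠ 0 ∧ ∀ j ≠ i, u j = 0) (hS : S.subtype.IsSeminormal) :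
    IsSeminormalRing S := by
  let toFrac : (∀ i, V i) →+* ∀ i, FractionRing (V i) :=
    RingHom.pi fun i => (algebraMap (V i) (FractionRing (V i))).comp (Pi.evalRingHom V i)
  have htoFrac_inj : Injective toFrac := fun a b hab =>
    funext fun i => IsFractionRing.injective (V i) (FractionRing (V i)) (congrFun hab i)
  refine IsSeminormalRing.of_injective (toFrac.comp S.subtype)
    (htoFrac_inj.comp S.subtype_injective)
    (fun t ht => Pi.isUnit_iff.mpr fun i => ?_)
    ((RingHom.IsSeminormal.pi fun i => IsIntegrallyClosed.isSeminormal_algebraMap _ _).comp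
      hS htoFrac_inj)
  simpa [toFrac] using Subring.apply_ne_zero_of_mem_nonZeroDivisors hS_supp ht i

theorem stmt7_general {k : Type*} [Field k] {n : ℕ} (L : Fin n → Type*) [∀ i, Field (L i)]
    [∀ i, Algebra k (L i)]
    (V : Fin n → Type*) [∀ i, CommRing (V i)] [∀ i, IsDomain (V i)]
    [∀ i, IsDiscreteValuationRing (V i)]
    (e : ∀ i, IsLocalRing.ResidueField (V i) ≃+* L i)
    (S : Subring (Π i, V i))
    (hS : ∀ v : Π i, V i, v ∈ S ↔ ∃ α : k, ∀ i,
      e i (IsLocalRing.residue (V i) (v i)) = algebraMap k (L i) α) :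
    IsSeminormalRing S := by
  let ρ : (∀ i, V i) →+* ∀ i, L i :=
    RingHom.pi fun i => (e i).toRingHom.comp ((IsLocalRing.residue (V i)).comp (Pi.evalRingHom V i))
  obtain rfl : S = (algebraMap k (∀ i, L i)).range.comap ρ := by
    ext v
    simp [hS, ρ, funext_iff, eq_comm]
  refine IsSeminormalRing.of_subring_pi (fun i => ?_)
    ((RingHom.isSeminormal_algebraMap_of_isReduced k _).subtype_comap ρ)
  obtain ⟨ϖ, hϖ⟩ := IsDiscreteValuationRing.exists_irreducible (V i)
  refine ⟨Pi.single i ϖ, ⟨0, funext fun j => ?_⟩, by simpa using hϖ.ne_zero,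
    fun j hj => Pi.single_eq_of_ne hj ϖ⟩
  by_cases hj : j = i
  · subst hj
    simp [ρ, (IsLocalRing.residue_eq_zero_iff ϖ).mpr hϖ.not_isUnit]
  · simp [ρ, Pi.single_eq_of_ne hj]

/-- Traverso glueing: the subring of a product of DVRs consisting of tuples congruent
to a common element of `k` modulo the maximal ideals is seminormal. -/
theorem stmt7 {k : Type*} [Field k] {n : ℕ} (L : Fin n → Type*) [∀ i, Field (L i)]
    [∀ i, Algebra k (L i)] [∀ i, FiniteDimensional k (L i)]
    (V : Fin n → Type*) [∀ i, CommRing (V i)] [∀ i, IsDomain (V i)]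
    [∀ i, IsDiscreteValuationRing (V i)]
    (e : ∀ i, IsLocalRing.ResidueField (V i) ≃+* L i)
    (S : Subring (Π i, V i))
    (hS : ∀ v : Π i, V i, v ∈ S ↔ ∃ α : k, ∀ i,
      e i (IsLocalRing.residue (V i) (v i)) = algebraMap k (L i) α) :
    IsSeminormalRing S :=
  stmt7_general L V e S hS
end

section
/- If g : R → S is a faithfully flat ring homomorphism of reduced Noetherian rings and S is seminormal, then R is seminormal. -/
open TensorProduct

lemma aux_nzd {R S : Type*} [CommRing R] [CommRing S] [Algebra R S] [Module.Flat R S]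
    {b : R} (hb : b ∈ nonZeroDivisors R) : algebraMap R S b ∈ nonZeroDivisors S := by
  rw [mem_nonZeroDivisors_iff_right] at hb ⊢
  intro s hsb
  have hf : Function.Injective (LinearMap.lsmul R R b) := fun u v huv => by
    simp only [LinearMap.lsmul_apply, smul_eq_mul] at huv
    exact sub_eq_zero.1 (hb (u - v) (by rw [sub_mul, mul_comm u, mul_comm v, huv, sub_self]))
  have hinj := Module.Flat.lTensor_preserves_injective_linearMap (M := S)
    (LinearMap.lsmul R R b) hf
  have h0 : (LinearMap.lTensor S (LinearMap.lsmul R R b)) (s ⊗ₜ[R] (1 : R)) = 0 := by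
    simp only [LinearMap.lTensor_tmul, LinearMap.lsmul_apply, smul_eq_mul, mul_one]
    have : s ⊗ₜ[R] b = (b • s) ⊗ₜ[R] (1 : R) := by
      rw [TensorProduct.smul_tmul]; simp
    rw [this, Algebra.smul_def, mul_comm, hsb]
    simp
  have h0' : (LinearMap.lTensor S (LinearMap.lsmul R R b)) (s ⊗ₜ[R] (1 : R)) =
      (LinearMap.lTensor S (LinearMap.lsmul R R b)) 0 := by rw [map_zero]; exact h0
  have hz := hinj h0'
  have := congrArg (TensorProduct.rid R S) hz
  simpa using this

lemma aux_pure {R S : Type*} [CommRing R] [CommRing S] [Algebra R S]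
    [Module.FaithfullyFlat R S] (I : Ideal R) {a : R}
    (h : algebraMap R S a ∈ I.map (algebraMap R S)) : a ∈ I := by
  set f : R →ₗ[R] R ⧸ I := I.mkQ.comp (LinearMap.toSpanSingleton R R a) with hf
  have hz : LinearMap.lTensor S f = 0 := by
    apply TensorProduct.ext'
    intro s r
    simp only [LinearMap.lTensor_tmul, LinearMap.zero_apply, hf, LinearMap.comp_apply,
      LinearMap.toSpanSingleton_apply, Submodule.mkQ_apply]
    apply (tensorQuotEquivQuotSMul S I).injective
    simp only [map_zero]
    rw [show (Submodule.Quotient.mk (r • a) : R ⧸ I) = Ideal.Quotient.mk I (r • a) from rfl]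
    rw [tensorQuotEquivQuotSMul_tmul_mk]
    rw [Submodule.Quotient.mk_eq_zero]
    rw [Ideal.smul_top_eq_map]
    have : (r • a) • s = (algebraMap R S (r*a)) * s := by
      rw [smul_eq_mul, Algebra.smul_def]
    rw [this, map_mul]
    exact Ideal.mul_mem_right _ _ (Ideal.mul_mem_left _ _ h)
  have : f = 0 := (Module.FaithfullyFlat.zero_iff_lTensor_zero R S f).2 hz
  have h1 := congrFun (congrArg DFunLike.coe this) 1
  simp only [hf, LinearMap.comp_apply, LinearMap.toSpanSingleton_apply, one_smul,
    Submodule.mkQ_apply, LinearMap.zero_apply] at h1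
  exact (Submodule.Quotient.mk_eq_zero I).1 h1


/-- If `R → S` is faithfully flat with `R`, `S` reduced Noetherian, and `S` is
seminormal, then `R` is seminormal. -/
theorem stmt10 {R S : Type*} [CommRing R] [CommRing S]
    [IsNoetherianRing R] [IsNoetherianRing S] [IsReduced R] [IsReduced S]
    [Algebra R S] [Module.FaithfullyFlat R S]
    (hS : IsSeminormalRing S) : IsSeminormalRing R := by
  refine ⟨inferInstance, fun x hx2 hx3 => ?_⟩
  have hunit : ∀ b : nonZeroDivisors R,
      IsUnit (((algebraMap S (FractionRing S)).comp (algebraMap R S)) b) := by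
    intro b
    exact IsLocalization.map_units (M := nonZeroDivisors S) (FractionRing S)
      ⟨algebraMap R S b, aux_nzd b.2⟩
  set φ : FractionRing R →+* FractionRing S := IsLocalization.lift (M := nonZeroDivisors R) hunit
    with hφdef
  have hφ : ∀ r : R, φ (algebraMap R (FractionRing R) r)
      = algebraMap S (FractionRing S) (algebraMap R S r) := fun r =>
    IsLocalization.lift_eq hunit r
  obtain ⟨r, hr⟩ := hx2
  obtain ⟨s, hs⟩ := hx3
  have hy2 : (φ x) ^ 2 ∈ (algebraMap S (FractionRing S)).range :=
    ⟨algebraMap R S r, by rw [← hφ, hr, map_pow]⟩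
  have hy3 : (φ x) ^ 3 ∈ (algebraMap S (FractionRing S)).range :=
    ⟨algebraMap R S s, by rw [← hφ, hs, map_pow]⟩
  obtain ⟨t, ht⟩ := hS.2 (φ x) hy2 hy3
  obtain ⟨⟨a, b⟩, hab⟩ := IsLocalization.mk'_surjective (nonZeroDivisors R) x
  have hspec : x * algebraMap R (FractionRing R) b = algebraMap R (FractionRing R) a := by
    rw [← hab]; exact IsLocalization.mk'_spec _ a b
  have key : t * algebraMap R S b = algebraMap R S a := by
    apply IsFractionRing.injective S (FractionRing S)
    rw [map_mul, ht, ← hφ, ← hφ, ← map_mul φ, hspec]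
  have ha : a ∈ Ideal.span {(b : R)} := by
    apply aux_pure (S := S)
    rw [← key]
    exact Ideal.mul_mem_left _ t (Ideal.mem_map_of_mem _ (Ideal.subset_span rfl))
  obtain ⟨c, hc⟩ := Ideal.mem_span_singleton'.1 ha
  refine ⟨c, ?_⟩
  have hu := IsLocalization.map_units (M := nonZeroDivisors R) (FractionRing R) b
  have heq : algebraMap R (FractionRing R) c * algebraMap R (FractionRing R) b
      = x * algebraMap R (FractionRing R) b := by
    rw [hspec, ← map_mul, hc]
  exact hu.mul_right_cancel heq
end

section
/- Let R = K[x_1, ..., x_n] be a polynomial ring over a field K, and let I be a monomial ideal generated by monomials whose exponent vectors all lie in the half-space { v : L(v) ≥ c } for a linear functional L with positive real coefficients and c > 0, and suppose I contains all monomials with L(exponent vector) ≥ c except possibly finitely many on the boundary hyperplane L = c. If μ is a monomial with L(h(μ)) = c, then μ is not in the inner integral closure of I. -/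
/-!
Give the variables the positive weights `m i`. The polynomials all of whose monomials have
weight at least `t` form an ideal `F t` (`weightGeIdeal`), and `F s * F t ≤ F (s + t)`. Since `I ≤ F c`, we get
`I ^ (N + 1) ≤ F ((N + 1) c)`, whereas `μ ^ N` is a monomial of the smaller weight `N c`.
A monomial `x` of weight `w < c'` is never integral over an ideal contained in `F c'`: in
`x ^ D = -∑ a j * x ^ (D - j)` every term on the right lies in `F (c' + (D - 1) w)`, while `x ^ D`
has weight `D w < c' + (D - 1) w`.
-/

theorem Finsupp.weight_nonneg {σ : Type*} {w : σ → ℝ} (hw : ∀ i, 0 ≤ w i) (e : σ →₀ ℕ) :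
    0 ≤ weight w e :=
  Finsupp.sum_nonneg fun i _ => nsmul_nonneg (hw i) _

namespace MvPolynomial

open Finsupp

variable {σ R : Type*} {w : σ → ℝ}

section CommSemiring

variable [CommSemiring R]

def weightGeIdeal (hw : ∀ i, 0 ≤ w i) (t : ℝ) : Ideal (MvPolynomial σ R) where
  carrier := {f | ∀ e ∈ f.support, t ≤ weight w e}
  zero_mem' := by simp
  add_mem' {f g} hf hg e he := by
    classical
    rcases Finset.mem_union.mp (support_add he) with h | h
    exacts [hf e h, hg e h]
  smul_mem' p f hf e he := by
    classical
    obtain ⟨e₁, -, e₂, h₂, rfl⟩ := Finset.mem_add.mp (support_mul p f he)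
    rw [map_add]
    linarith [hf e₂ h₂, weight_nonneg hw e₁]

variable (hw : ∀ i, 0 ≤ w i)

theorem mem_weightGeIdeal {t : ℝ} {f : MvPolynomial σ R} :
    f ∈ weightGeIdeal hw t ↔ ∀ e ∈ f.support, t ≤ weight w e :=
  Iff.rfl

theorem weightGeIdeal_antitone : Antitone (weightGeIdeal (R := R) hw) :=
  fun _ _ hst _ hf => (mem_weightGeIdeal hw).mpr fun e he => hst.trans (hf e he)

theorem mul_mem_weightGeIdeal {s t : ℝ} {f g : MvPolynomial σ R}
    (hf : f ∈ weightGeIdeal hw s) (hg : g ∈ weightGeIdeal hw t) :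
    f * g ∈ weightGeIdeal hw (s + t) := by
  classical
  rw [mem_weightGeIdeal] at *
  intro e he
  obtain ⟨e₁, h₁, e₂, h₂, rfl⟩ := Finset.mem_add.mp (support_mul f g he)
  rw [map_add]
  exact add_le_add (hf e₁ h₁) (hg e₂ h₂)

theorem pow_le_weightGeIdeal {I : Ideal (MvPolynomial σ R)} {c : ℝ}
    (hI : I ≤ weightGeIdeal hw c) (k : ℕ) : I ^ k ≤ weightGeIdeal hw (k * c) := by
  induction k with
  | zero =>
    intro f _
    simpa [mem_weightGeIdeal] using fun e _ => weight_nonneg hw e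
  | succ k ih =>
    rw [pow_succ, Nat.cast_succ, add_one_mul]
    exact Ideal.mul_le.mpr fun f hf g hg => mul_mem_weightGeIdeal hw (ih hf) (hI hg)

theorem monomial_mem_weightGeIdeal_iff {t : ℝ} {e : σ →₀ ℕ} {r : R} (hr : r ≠ 0) :
    monomial e r ∈ weightGeIdeal hw t ↔ t ≤ weight w e := by
  classical
  simp [mem_weightGeIdeal, support_monomial, hr]

end CommSemiring

theorem monomial_one_notMem_intClosure [CommRing R] [Nontrivial R] (hw : ∀ i, 0 ≤ w i)
    {I : Ideal (MvPolynomial σ R)} {c : ℝ} (hI : I ≤ weightGeIdeal hw c) {e : σ →₀ ℕ}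
    (he : weight w e < c) : monomial e (1 : R) ∉ I.intClosure := by
  rintro ⟨D, a, -, ha, heq⟩
  have hpow (k : ℕ) : (monomial e (1 : R)) ^ k ∈ weightGeIdeal hw (k * weight w e) := by
    rw [monomial_pow, one_pow, monomial_mem_weightGeIdeal_iff hw one_ne_zero, map_nsmul,
      nsmul_eq_mul]
  have hterm : ∀ j ∈ Finset.Icc 1 D, a j * (monomial e (1 : R)) ^ (D - j) ∈
      weightGeIdeal hw (c + (D - 1) * weight w e) := by
    intro j hj
    obtain ⟨hj₁, hjD⟩ := Finset.mem_Icc.mp hj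
    refine weightGeIdeal_antitone hw ?_
      (mul_mem_weightGeIdeal hw (pow_le_weightGeIdeal hw hI j (ha j hj₁ hjD)) (hpow (D - j)))
    have : (1 : ℝ) ≤ j := by exact_mod_cast hj₁
    rw [Nat.cast_sub hjD]
    nlinarith [mul_nonneg (sub_nonneg.mpr this) (sub_nonneg.mpr he.le)]
  have hmem : (monomial e (1 : R)) ^ D ∈ weightGeIdeal hw (c + (D - 1) * weight w e) := by
    rw [eq_neg_of_add_eq_zero_left heq]
    exact neg_mem (Ideal.sum_mem _ hterm)
  rw [monomial_pow, one_pow, monomial_mem_weightGeIdeal_iff hw one_ne_zero, map_nsmul,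
    nsmul_eq_mul] at hmem
  linarith

end MvPolynomial

open MvPolynomial in
theorem stmt14_general {K : Type*} [Field K] {n : ℕ} (m : Fin n → ℝ) (hm : ∀ i, 0 < m i)
    (c : ℝ) (hc : 0 < c) (I : Ideal (MvPolynomial (Fin n) K))
    (G : Set (Fin n →₀ ℕ)) (hG : ∀ e ∈ G, c ≤ ∑ i, m i * (e i : ℝ))
    (hIG : I = Ideal.span ((fun e => (monomial e (1 : K) : MvPolynomial (Fin n) K)) '' G))
    (d : Fin n →₀ ℕ) (hd : ∑ i, m i * (d i : ℝ) = c) :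
    ¬ ∃ N : ℕ, 1 ≤ N ∧ (monomial d (1 : K) : MvPolynomial (Fin n) K) ^ N ∈
      (I ^ (N + 1)).intClosure := by
  have hw : ∀ i, 0 ≤ m i := fun i => (hm i).le
  have hweight (e : Fin n →₀ ℕ) : Finsupp.weight m e = ∑ i, m i * (e i : ℝ) := by
    simp only [Finsupp.weight_eq_sum, nsmul_eq_mul, mul_comm]
  have hI : I ≤ weightGeIdeal hw c := by
    rw [hIG, Ideal.span_le]
    rintro _ ⟨e, heG, rfl⟩
    rw [SetLike.mem_coe, monomial_mem_weightGeIdeal_iff hw one_ne_zero, hweight]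
    exact hG e heG
  rintro ⟨N, -, hN⟩
  rw [monomial_pow, one_pow] at hN
  refine monomial_one_notMem_intClosure hw (pow_le_weightGeIdeal hw hI (N + 1)) ?_ hN
  rw [map_nsmul, nsmul_eq_mul, hweight, hd]
  push_cast
  linarith

open MvPolynomial in
/-- Let `I` be a monomial ideal generated by monomials with exponent vectors in the
half-space `{v : L(v) ≥ c}` for a positive linear functional `L` and `c > 0`, containing
all monomials with `L ≥ c` except possibly finitely many on the boundary `L = c`.
Then a monomial `μ` with `L(h(μ)) = c` is not in the inner integral closure of `I`. -/
theorem stmt14 {K : Type*} [Field K] {n : ℕ} (m : Fin n → ℝ) (hm : ∀ i, 0 < m i)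
    (c : ℝ) (hc : 0 < c) (I : Ideal (MvPolynomial (Fin n) K))
    (G : Set (Fin n →₀ ℕ)) (hG : ∀ e ∈ G, c ≤ ∑ i, m i * (e i : ℝ))
    (hIG : I = Ideal.span ((fun e => (monomial e (1 : K) : MvPolynomial (Fin n) K)) '' G))
    (E : Finset (Fin n →₀ ℕ)) (hE : ∀ e ∈ E, ∑ i, m i * (e i : ℝ) = c)
    (hfull : ∀ e : Fin n →₀ ℕ, c ≤ ∑ i, m i * (e i : ℝ) → e ∉ E →
      (monomial e (1 : K) : MvPolynomial (Fin n) K) ∈ I)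
    (d : Fin n →₀ ℕ) (hd : ∑ i, m i * (d i : ℝ) = c) :
    ¬ ∃ N : ℕ, 1 ≤ N ∧ (monomial d (1 : K) : MvPolynomial (Fin n) K) ^ N ∈
      (I ^ (N + 1)).intClosure :=
  stmt14_general m hm c hc I G hG hIG d hd
end

section
/- Let R be a Noetherian ring, I an ideal, and W a multiplicative set. Then the natural closure of I·W⁻¹R in W⁻¹R equals the expansion of the natural closure of I: (I_W)^♮ = (I^♮)_W. -/
/-- The natural closure of an ideal: `I^♮ = I + I_{>1}`. -/
def Ideal.natClosure {R : Type*} [CommRing R] (I : Ideal R) : Ideal R :=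
  I ⊔ Ideal.span I.innerIntClosure

/-!
Extension along any ring map preserves integral dependence over powers of an ideal, which
gives `(I^♮)_W ⊆ (I_W)^♮`. Conversely, an integral-dependence equation over `I_W` can be cleared
of denominators: multiplying the unknown by a common denominator `w` of the coefficients and then
by an element of `W` killing the resulting equation in `R` gives an equation over `I`. Hence
every `x ∈ (I_W)_{>1}` is, up to a unit of `W⁻¹R`, the image of an element of `I_{>1}`.
-/

open Finset

def monicEval {A : Type*} [CommRing A] (d : ℕ) (a : ℕ → A) (x : A) : A :=
  x ^ d + ∑ j ∈ Icc 1 d, a j * x ^ (d - j)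

section MonicEval

variable {A B : Type*} [CommRing A] [CommRing B]

lemma monicEval_congr {d : ℕ} {a b : ℕ → A} (x : A) (h : ∀ j ∈ Icc 1 d, a j = b j) :
    monicEval d a x = monicEval d b x := by
  rw [monicEval, monicEval, sum_congr rfl fun j hj => by rw [h j hj]]

lemma monicEval_mul (d : ℕ) (a : ℕ → A) (c x : A) :
    monicEval d (fun j => c ^ j * a j) (c * x) = c ^ d * monicEval d a x := by
  rw [monicEval, monicEval, mul_add, mul_sum, mul_pow]
  congr 1
  refine sum_congr rfl fun j hj => ?_
  obtain ⟨k, rfl⟩ := Nat.exists_eq_add_of_le (mem_Icc.mp hj).2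
  rw [Nat.add_sub_cancel_left, pow_add]
  ring

lemma map_monicEval (f : A →+* B) (d : ℕ) (a : ℕ → A) (x : A) :
    f (monicEval d a x) = monicEval d (fun j => f (a j)) (f x) := by
  simp only [monicEval, map_add, map_pow, map_sum, map_mul]

end MonicEval

namespace Ideal

variable {R S : Type*} [CommRing R] [CommRing S]

lemma mem_intClosure_iff (I : Ideal R) (x : R) :
    x ∈ I.intClosure ↔ ∃ (d : ℕ) (a : ℕ → R), 0 < d ∧ (∀ j, 1 ≤ j → j ≤ d → a j ∈ I ^ j) ∧
      monicEval d a x = 0 :=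
  Iff.rfl

lemma mul_mem_intClosure {I : Ideal R} (c : R) {x : R} (hx : x ∈ I.intClosure) :
    c * x ∈ I.intClosure := by
  obtain ⟨d, a, hd, ha, hx⟩ := hx
  refine (mem_intClosure_iff _ _).mpr
    ⟨d, fun j => c ^ j * a j, hd, fun j h1 h2 => mul_mem_left _ _ (ha j h1 h2), ?_⟩
  rw [monicEval_mul, show monicEval d a x = 0 from hx, mul_zero]

lemma map_mem_intClosure (f : R →+* S) {I : Ideal R} {x : R} (hx : x ∈ I.intClosure) :
    f x ∈ (I.map f).intClosure := by
  obtain ⟨d, a, hd, ha, hx⟩ := hx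
  refine (mem_intClosure_iff _ _).mpr ⟨d, fun j => f (a j), hd, fun j h1 h2 => ?_, ?_⟩
  · rw [← Ideal.map_pow]
    exact mem_map_of_mem f (ha j h1 h2)
  · rw [← map_monicEval, show monicEval d a x = 0 from hx, map_zero]

lemma image_innerIntClosure_subset (f : R →+* S) (I : Ideal R) :
    f '' I.innerIntClosure ⊆ (I.map f).innerIntClosure := by
  rintro _ ⟨r, ⟨n, hn, hr⟩, rfl⟩
  refine ⟨n, hn, ?_⟩
  rw [← _root_.map_pow, ← Ideal.map_pow]
  exact map_mem_intClosure f hr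

lemma map_natClosure_le (f : R →+* S) (I : Ideal R) :
    I.natClosure.map f ≤ (I.map f).natClosure := by
  rw [natClosure, natClosure, map_sup, map_span]
  exact sup_le_sup_left (span_mono (image_innerIntClosure_subset f I)) _

end Ideal

namespace IsLocalization

variable {R : Type*} [CommRing R] (W : Submonoid R) (S : Type*) [CommRing S] [Algebra R S]
  [IsLocalization W S]

lemma exists_common_den_of_mem_map {ι : Type*} (s : Finset ι) (J : ι → Ideal R) {a : ι → S}
    (ha : ∀ i ∈ s, a i ∈ (J i).map (algebraMap R S)) :
    ∃ (w : W) (b : ι → R), ∀ i ∈ s, b i ∈ J i ∧ algebraMap R S w * a i = algebraMap R S (b i) := by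
  have hden : ∀ i ∈ s, ∃ (b : R) (w : W), b ∈ J i ∧ a i * algebraMap R S w = algebraMap R S b :=
    fun i hi => by
      obtain ⟨⟨b, w⟩, h⟩ := (mem_map_algebraMap_iff W S).mp (ha i hi)
      exact ⟨b, w, b.2, h⟩
  classical
  choose! b w hb using hden
  refine ⟨∏ i ∈ s, w i, fun i => (∏ j ∈ s.erase i, (w j : R)) * b i,
    fun i hi => ⟨Ideal.mul_mem_left _ _ (hb i hi).1, ?_⟩⟩
  rw [← mul_prod_erase s w hi, Submonoid.coe_mul, Submonoid.coe_finsetProd, map_mul, map_mul,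
    ← (hb i hi).2]
  ring

lemma exists_mul_mem_intClosure_of_monicEval_eq_zero (K : Ideal R) {d : ℕ} (hd : 0 < d)
    {c : ℕ → R} (hc : ∀ j, 1 ≤ j → j ≤ d → c j ∈ K ^ j) {y : R}
    (hy : monicEval d (fun j => algebraMap R S (c j)) (algebraMap R S y) = 0) :
    ∃ v : W, (v : R) * y ∈ K.intClosure := by
  rw [← map_monicEval, map_eq_zero_iff W S] at hy
  obtain ⟨v, hv⟩ := hy
  refine ⟨v, (K.mem_intClosure_iff _).mpr
    ⟨d, fun j => (v : R) ^ j * c j, hd, fun j h1 h2 => Ideal.mul_mem_left _ _ (hc j h1 h2), ?_⟩⟩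
  obtain ⟨e, rfl⟩ := Nat.exists_eq_add_of_lt hd
  rw [monicEval_mul, pow_succ, mul_assoc, hv, mul_zero]

lemma exists_mul_mem_intClosure_of_algebraMap_mem (K : Ideal R) {s : R}
    (hs : algebraMap R S s ∈ (K.map (algebraMap R S)).intClosure) :
    ∃ u : W, (u : R) * s ∈ K.intClosure := by
  obtain ⟨d, a, hd, ha, hs⟩ := hs
  obtain ⟨w, b, hb⟩ := exists_common_den_of_mem_map W S (Icc 1 d) (fun j => K ^ j)
    (a := a) fun j hj => by
      rw [Ideal.map_pow]
      exact ha j (mem_Icc.mp hj).1 (mem_Icc.mp hj).2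
  -- Scaling the unknown by `w` turns the coefficient `a j` into `w ^ j * a j`, which lies in `R`.
  have hcoeff : ∀ j ∈ Icc 1 d,
      algebraMap R S ((w : R) ^ (j - 1) * b j) = algebraMap R S w ^ j * a j := by
    intro j hj
    rw [map_mul, map_pow, ← (hb j hj).2, ← Nat.sub_add_cancel (mem_Icc.mp hj).1, pow_succ,
      Nat.add_sub_cancel, mul_assoc]
  obtain ⟨v, hv⟩ := exists_mul_mem_intClosure_of_monicEval_eq_zero W S K hd
    (c := fun j => (w : R) ^ (j - 1) * b j) (y := w * s)
    (fun j h1 h2 => Ideal.mul_mem_left _ _ (hb j (mem_Icc.mpr ⟨h1, h2⟩)).1)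
    (by rw [monicEval_congr _ hcoeff, map_mul, monicEval_mul, show monicEval d a _ = 0 from hs,
      mul_zero])
  exact ⟨v * w, by rwa [Submonoid.coe_mul, mul_assoc]⟩

lemma exists_mul_eq_algebraMap_of_mem_innerIntClosure (I : Ideal R) {x : S}
    (hx : x ∈ (I.map (algebraMap R S)).innerIntClosure) :
    ∃ w : W, ∃ r ∈ I.innerIntClosure, algebraMap R S w * x = algebraMap R S r := by
  obtain ⟨n, hn, hx⟩ := hx
  obtain ⟨⟨s, w₀⟩, hs⟩ := surj W x
  have hsn : algebraMap R S (s ^ n) ∈ ((I ^ (n + 1)).map (algebraMap R S)).intClosure := by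
    rw [Ideal.map_pow, map_pow, ← hs, mul_pow, mul_comm]
    exact Ideal.mul_mem_intClosure _ hx
  obtain ⟨u, hu⟩ := exists_mul_mem_intClosure_of_algebraMap_mem W S _ hsn
  refine ⟨u * w₀, u * s, ⟨n, hn, ?_⟩, ?_⟩
  · rw [show ((u : R) * s) ^ n = (u : R) ^ (n - 1) * (u * s ^ n) by
      rw [← mul_assoc, ← pow_succ, Nat.sub_add_cancel hn, mul_pow]]
    exact Ideal.mul_mem_intClosure _ hu
  · rw [Submonoid.coe_mul, map_mul, map_mul, mul_assoc, mul_comm _ x, hs]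

end IsLocalization

lemma IsLocalization.natClosure_map {R : Type*} [CommRing R] (W : Submonoid R) (S : Type*)
    [CommRing S] [Algebra R S] [IsLocalization W S] (I : Ideal R) :
    (I.map (algebraMap R S)).natClosure = I.natClosure.map (algebraMap R S) := by
  refine le_antisymm (sup_le (Ideal.map_mono le_sup_left) (Ideal.span_le.mpr fun x hx => ?_))
    (Ideal.map_natClosure_le _ I)
  obtain ⟨w, r, hr, hx⟩ := IsLocalization.exists_mul_eq_algebraMap_of_mem_innerIntClosure W S I hx
  have hr' : algebraMap R S r ∈ I.natClosure.map (algebraMap R S) :=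
    Ideal.mem_map_of_mem _ (Ideal.mem_sup_right (Ideal.subset_span hr))
  rw [← hx] at hr'
  exact (Ideal.unit_mul_mem_iff_mem _ (IsLocalization.map_units S w)).mp hr'

theorem stmt16_general {R : Type*} [CommRing R] (I : Ideal R)
    (W : Submonoid R) :
    (Ideal.map (algebraMap R (Localization W)) I).natClosure =
      Ideal.map (algebraMap R (Localization W)) I.natClosure :=
  IsLocalization.natClosure_map W (Localization W) I

/-- Natural closure commutes with localization: `(I_W)^♮ = (I^♮)_W`. -/
theorem stmt16 {R : Type*} [CommRing R] [IsNoetherianRing R] (I : Ideal R)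
    (W : Submonoid R) :
    (Ideal.map (algebraMap R (Localization W)) I).natClosure =
      Ideal.map (algebraMap R (Localization W)) I.natClosure :=
  stmt16_general I W
end

section
/- Let k be a field of prime characteristic p, L_1, ..., L_n finite extensions of k such that the image of k under the diagonal embedding into L_1 × ... × L_n is p-th root closed (i.e., any c in the product with c^p in the diagonal image lies in the diagonal image), and V_i DVRs with residue fields L_i. Then the glued ring S = { (v_1,...,v_n) : ∃ α ∈ k, v_i ≡ α mod m_i } has the property: for every prime q and every v in ∏ V_i with v^q ∈ S and q·v ∈ S, one has v ∈ S. -/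
/-!
Reducing modulo the maximal ideals, `v ∈ S` says that the residue tuple of `v` lies in the
diagonal copy of `k` in `∏ L_i`, i.e. in the bottom `k`-subalgebra. That subalgebra is weakly
normal in any `k`-algebra whose `p`-th roots of diagonal elements are diagonal: for `q = p` this
is the hypothesis, and for `q ≠ p` the scalar `q` is invertible in `k`.
-/

section

variable {k A : Type*} [Field k] [Semiring A] [Algebra k A]

theorem mem_bot_of_algebraMap_mul_mem_bot {c : k} (hc : c ≠ 0) {x : A}
    (h : algebraMap k A c * x ∈ (⊥ : Subalgebra k A)) : x ∈ (⊥ : Subalgebra k A) := by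
  have hx : x = algebraMap k A c⁻¹ * (algebraMap k A c * x) := by
    rw [← mul_assoc, ← map_mul, inv_mul_cancel₀ hc, map_one, one_mul]
  rw [hx]
  exact mul_mem (Subalgebra.algebraMap_mem _ _) h

theorem mem_bot_of_pow_mem_bot_of_natCast_mul_mem_bot (p : ℕ) [CharP k p]
    (hroot : ∀ c : A, c ^ p ∈ (⊥ : Subalgebra k A) → c ∈ (⊥ : Subalgebra k A))
    {q : ℕ} (hq : q.Prime) {x : A} (hpow : x ^ q ∈ (⊥ : Subalgebra k A))
    (hmul : (q : A) * x ∈ (⊥ : Subalgebra k A)) : x ∈ (⊥ : Subalgebra k A) := by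
  obtain rfl | hqp := eq_or_ne q p
  · exact hroot x hpow
  · refine mem_bot_of_algebraMap_mul_mem_bot (CharP.cast_ne_zero_of_ne_of_prime k hq hqp.symm) ?_
    rwa [map_natCast]

end

theorem Pi.mem_bot_iff {k ι : Type*} [CommSemiring k] {L : ι → Type*} [∀ i, Semiring (L i)]
    [∀ i, Algebra k (L i)] (c : Π i, L i) :
    c ∈ (⊥ : Subalgebra k (Π i, L i)) ↔ ∃ a : k, ∀ i, c i = algebraMap k (L i) a := by
  simp only [Algebra.mem_bot, Set.mem_range, funext_iff, Pi.algebraMap_apply, eq_comm]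

theorem stmt19_general {k : Type*} [Field k] (p : ℕ) [CharP k p]
    {n : ℕ} (L : Fin n → Type*) [∀ i, Field (L i)] [∀ i, Algebra k (L i)]
    (V : Fin n → Type*) [∀ i, CommRing (V i)] [∀ i, IsDomain (V i)]
    [∀ i, IsDiscreteValuationRing (V i)]
    (e : ∀ i, IsLocalRing.ResidueField (V i) ≃+* L i)
    (hroot : ∀ c : Π i, L i, (∃ a : k, ∀ i, c i ^ p = algebraMap k (L i) a) →
      ∃ b : k, ∀ i, c i = algebraMap k (L i) b)
    (S : Subring (Π i, V i))
    (hS : ∀ v : Π i, V i, v ∈ S ↔ ∃ α : k, ∀ i,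
      e i (IsLocalRing.residue (V i) (v i)) = algebraMap k (L i) α)
    (q : ℕ) (hq : q.Prime) (v : Π i, V i)
    (h1 : v ^ q ∈ S) (h2 : (q : Π i, V i) * v ∈ S) :
    v ∈ S := by
  let residues : (Π i, V i) →+* Π i, L i := RingHom.pi fun i =>
    ((e i : _ →+* L i).comp (IsLocalRing.residue (V i))).comp (Pi.evalRingHom V i)
  have mem_S_iff (w : Π i, V i) : w ∈ S ↔ residues w ∈ (⊥ : Subalgebra k (Π i, L i)) := by
    rw [hS, Pi.mem_bot_iff]
    rfl
  rw [mem_S_iff, map_pow] at h1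
  rw [mem_S_iff, map_mul, map_natCast] at h2
  rw [mem_S_iff]
  refine mem_bot_of_pow_mem_bot_of_natCast_mul_mem_bot p (fun c hc => ?_) hq h1 h2
  rw [Pi.mem_bot_iff] at hc ⊢
  exact hroot c hc

/-- If the diagonal image of `k` in `L_1 × ... × L_n` is `p`-th root closed, then the
glued ring `S` (tuples in `∏ V_i` congruent to a common element of `k` modulo the
maximal ideals) is weakly normal relative to `∏ V_i`: for every prime `q` and every
`v ∈ ∏ V_i` with `v^q ∈ S` and `q·v ∈ S`, one has `v ∈ S`. -/
theorem stmt19 {k : Type*} [Field k] (p : ℕ) [Fact p.Prime] [CharP k p]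
    {n : ℕ} (L : Fin n → Type*) [∀ i, Field (L i)] [∀ i, Algebra k (L i)]
    [∀ i, FiniteDimensional k (L i)]
    (V : Fin n → Type*) [∀ i, CommRing (V i)] [∀ i, IsDomain (V i)]
    [∀ i, IsDiscreteValuationRing (V i)]
    (e : ∀ i, IsLocalRing.ResidueField (V i) ≃+* L i)
    (hroot : ∀ c : Π i, L i, (∃ a : k, ∀ i, c i ^ p = algebraMap k (L i) a) →
      ∃ b : k, ∀ i, c i = algebraMap k (L i) b)
    (S : Subring (Π i, V i))
    (hS : ∀ v : Π i, V i, v ∈ S ↔ ∃ α : k, ∀ i,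
      e i (IsLocalRing.residue (V i) (v i)) = algebraMap k (L i) α)
    (q : ℕ) (hq : q.Prime) (v : Π i, V i)
    (h1 : v ^ q ∈ S) (h2 : (q : Π i, V i) * v ∈ S) :
    v ∈ S :=
  stmt19_general p L V e hroot S hS q hq v h1 h2
end
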